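/- Let A_I be the direct product of a family {A_i : i ∈ I} of L-partial structures over a nonempty index set I. Then A_I is a total L-structure if and only if for every relation symbol Z of L, either Z^{A_i}₀ = ∅ for every i ∈ I, or there exists k ∈ I with Z^{A_k}₊ ∪ Z^{A_k}₀ = ∅. -/

import Mathlib

set_option linter.unnecessarySimpa false

open FirstOrder FirstOrder.Language

universe u v w

/-- A partial structure for a relational language `L` on a universe `M`:
each relation symbol is interpreted by a pair of disjoint sets (the positive
and negative extensions); the undefined part is the complement of their union. -/
structure PartialStructure (L : FirstOrder.Language.{u, v}) (M : Type w) where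
  plus : ∀ {n : ℕ}, L.Relations n → Set (Fin n → M)
  minus : ∀ {n : ℕ}, L.Relations n → Set (Fin n → M)
  disjoint : ∀ {n : ℕ} (R : L.Relations n), plus R ∩ minus R = ∅

namespace PartialStructure

variable {L : FirstOrder.Language.{u, v}} {M : Type w}

/-- The undefined part `R₀` of the interpretation of a relation symbol. -/
def zero (A : PartialStructure L M) {n : ℕ} (R : L.Relations n) : Set (Fin n → M) :=
  (A.plus R ∪ A.minus R)ᶜ

/-- A partial structure is total if every relation is everywhere defined. -/
def IsTotal (A : PartialStructure L M) : Prop := ∀ {n : ℕ} (R : L.Relations n), A.zero R = ∅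

/-- `B` expands `A` (`A ⋐ B`). -/
def Expands (A B : PartialStructure L M) : Prop :=
  ∀ {n : ℕ} (R : L.Relations n), A.plus R ⊆ B.plus R ∧ A.minus R ⊆ B.minus R

/-- `B` is `A`-normal: `A ⋐ B` and `B` is total. -/
def IsNormal (A B : PartialStructure L M) : Prop := A.Expands B ∧ B.IsTotal

/-- A total partial structure for a relational language, viewed as an ordinary
first-order structure (Tarskian semantics given by the positive part). -/
def toStructure [L.IsRelational] (A : PartialStructure L M) : L.Structure M where
  funMap f := isEmptyElim f
  RelMap R x := x ∈ A.plus R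

/-- Quasi-truth: `φ` is quasi-true in `A` iff some `A`-normal structure
satisfies `φ` in the Tarskian sense. -/
def QuasiTrue [L.IsRelational] (A : PartialStructure L M) (φ : L.Sentence) : Prop :=
  ∃ B : PartialStructure L M, A.IsNormal B ∧ @Sentence.Realize L M B.toStructure φ

/-- The total structure obtained from `A` by declaring the undefined part positive. -/
def posComp (A : PartialStructure L M) : PartialStructure L M where
  plus R := A.plus R ∪ A.zero R
  minus R := A.minus R
  disjoint R := by
    rw [Set.eq_empty_iff_forall_notMem]
    rintro x ⟨hx | hx, hm⟩
    · have : x ∈ A.plus R ∩ A.minus R := ⟨hx, hm⟩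
      rw [A.disjoint R] at this
      exact this
    · exact hx (Or.inr hm)

/-- The total structure obtained from `A` by declaring the undefined part negative. -/
def negComp (A : PartialStructure L M) : PartialStructure L M where
  plus R := A.plus R
  minus R := A.minus R ∪ A.zero R
  disjoint R := by
    rw [Set.eq_empty_iff_forall_notMem]
    rintro x ⟨hx, hm | hm⟩
    · have : x ∈ A.plus R ∩ A.minus R := ⟨hx, hm⟩
      rw [A.disjoint R] at this
      exact this
    · exact hm (Or.inl hx)

/-- The direct product of a family of partial structures. -/
def directProduct {ι : Type*} {M : ι → Type*} (𝔸 : ∀ i : ι, PartialStructure L (M i)) :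
    PartialStructure L (∀ i, M i) where
  plus R := {h | ∀ i, (fun k => h k i) ∈ (𝔸 i).plus R}
  minus R := {h | ∃ i, (fun k => h k i) ∈ (𝔸 i).minus R}
  disjoint R := by
    rw [Set.eq_empty_iff_forall_notMem]
    rintro x ⟨hp, i, hm⟩
    have : (fun k => x k i) ∈ (𝔸 i).plus R ∩ (𝔸 i).minus R := ⟨hp i, hm⟩
    rw [(𝔸 i).disjoint R] at this
    exact this

end PartialStructure

/-- The equivalence relation `∼_F` induced by a filter `F` on a product `∀ i, M i`. -/
def filterSetoid {ι : Type*} (F : Filter ι) (M : ι → Type*) : Setoid (∀ i, M i) where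
  r h h' := {i | h i = h' i} ∈ F
  iseqv := by
    refine ⟨fun h => ?_, fun {h h'} hh => ?_, fun {h h' h''} h1 h2 => ?_⟩
    · simpa using F.univ_sets
    · exact Filter.mem_of_superset hh fun i hi => hi.symm
    · exact Filter.mem_of_superset (Filter.inter_mem h1 h2) fun i hi => hi.1.trans hi.2

namespace PartialStructure

variable {L : FirstOrder.Language.{u, v}}

/-- Positive part of the reduced product. -/
def rpPlus {ι : Type*} {M : ι → Type*} (F : Filter ι) (𝔸 : ∀ i : ι, PartialStructure L (M i))
    {n : ℕ} (R : L.Relations n) : Set (Fin n → Quotient (filterSetoid F M)) :=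
  {x | ∃ h : Fin n → ∀ i, M i, (∀ k, Quotient.mk (filterSetoid F M) (h k) = x k) ∧
      {i | (fun k => h k i) ∈ (𝔸 i).plus R} ∈ F}

/-- Undefined part of the reduced product. -/
def rpZero {ι : Type*} {M : ι → Type*} (F : Filter ι) (𝔸 : ∀ i : ι, PartialStructure L (M i))
    {n : ℕ} (R : L.Relations n) : Set (Fin n → Quotient (filterSetoid F M)) :=
  {x | ∃ h : Fin n → ∀ i, M i, (∀ k, Quotient.mk (filterSetoid F M) (h k) = x k) ∧
      {i | (fun k => h k i) ∈ (𝔸 i).zero R} ∈ F}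

/-- The reduced product of a family of partial structures over a filter. -/
def reducedProduct {ι : Type*} {M : ι → Type*} (F : Filter ι)
    (𝔸 : ∀ i : ι, PartialStructure L (M i)) :
    PartialStructure L (Quotient (filterSetoid F M)) where
  plus R := rpPlus F 𝔸 R
  minus R := (rpPlus F 𝔸 R ∪ rpZero F 𝔸 R)ᶜ
  disjoint R := by
    rw [Set.eq_empty_iff_forall_notMem]
    rintro x ⟨hp, hm⟩
    exact hm (Or.inl hp)

end PartialStructure

namespace PartialStructure

variable {L : FirstOrder.Language.{u, v}} {n : ℕ}

theorem notMem_minus_of_mem_plus {M : Type*} (A : PartialStructure L M) {R : L.Relations n}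
    {x : Fin n → M} (hx : x ∈ A.plus R) : x ∉ A.minus R :=
  Set.disjoint_left.mp (Set.disjoint_iff_inter_eq_empty.mpr (A.disjoint R)) hx

theorem plus_union_zero {M : Type*} (A : PartialStructure L M) (R : L.Relations n) :
    A.plus R ∪ A.zero R = (A.minus R)ᶜ := by
  ext x
  have := A.notMem_minus_of_mem_plus (R := R) (x := x)
  simp only [zero, Set.mem_union, Set.mem_compl_iff]
  tauto

theorem mem_directProduct_zero_iff {ι : Type*} {M : ι → Type*}
    {𝔸 : ∀ i, PartialStructure L (M i)} {R : L.Relations n} {x : Fin n → ∀ i, M i} :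
    x ∈ (directProduct 𝔸).zero R ↔
      (∃ i, (fun k => x k i) ∈ (𝔸 i).zero R) ∧ ∀ i, (fun k => x k i) ∉ (𝔸 i).minus R := by
  simp only [zero, directProduct, Set.mem_compl_iff, Set.mem_union, Set.mem_ofPred_eq]
  grind

theorem directProduct_zero_eq_empty_iff {ι : Type*} {M : ι → Type*}
    (𝔸 : ∀ i, PartialStructure L (M i)) (R : L.Relations n) :
    (directProduct 𝔸).zero R = ∅ ↔ (∀ i, (𝔸 i).zero R = ∅) ∨ ∃ k, (𝔸 k).minus R = Set.univ := by
  simp only [Set.eq_empty_iff_forall_notMem, mem_directProduct_zero_iff, Set.eq_univ_iff_forall]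
  classical
  constructor
  · intro h
    by_contra! ⟨⟨i₀, t₀, ht₀⟩, hs⟩
    choose s hs using hs
    -- a tuple that is undefined at `i₀` and not negative at any other coordinate
    refine h (Function.swap (Function.update s i₀ t₀))
      ⟨⟨i₀, by simpa [Function.swap] using ht₀⟩, ?_⟩
    exact (Function.forall_update_iff s (p := fun i t => t ∉ (𝔸 i).minus R)).2
      ⟨fun h => ht₀ (Or.inr h), fun i _ => hs i⟩
  · rintro (h | ⟨k, hk⟩) x ⟨⟨i, hi⟩, hx⟩
    exacts [h i _ hi, hx k (hk _)]

end PartialStructure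

theorem directProduct_isTotal_iff_general {L : FirstOrder.Language.{u, v}}
    {ι : Type*} {M : ι → Type w}
    (𝔸 : ∀ i : ι, PartialStructure L (M i)) :
    (PartialStructure.directProduct 𝔸).IsTotal ↔
      ∀ {n : ℕ} (Z : L.Relations n),
        (∀ i, (𝔸 i).zero Z = ∅) ∨ ∃ k, (𝔸 k).plus Z ∪ (𝔸 k).zero Z = ∅ := by
  simp only [PartialStructure.IsTotal, PartialStructure.directProduct_zero_eq_empty_iff,
    PartialStructure.plus_union_zero, Set.compl_empty_iff]

/-- characterization of when a direct product is total. -/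
theorem directProduct_isTotal_iff {L : FirstOrder.Language.{u, v}}
    {ι : Type*} [Nonempty ι] {M : ι → Type w} [∀ i, Nonempty (M i)]
    (𝔸 : ∀ i : ι, PartialStructure L (M i)) :
    (PartialStructure.directProduct 𝔸).IsTotal ↔
      ∀ {n : ℕ} (Z : L.Relations n),
        (∀ i, (𝔸 i).zero Z = ∅) ∨ ∃ k, (𝔸 k).plus Z ∪ (𝔸 k).zero Z = ∅ :=
  directProduct_isTotal_iff_general 𝔸
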